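/- Let G be any finite simple graph and let G₀ = G − N[core(G)] be the subgraph induced by the vertices lying outside the closed neighborhood of core(G). Then α(G) = α(G₀) + ξ(G), the maximum stable sets of G₀ are exactly the sets S ∩ V(G₀) for S a maximum stable set of G, and core(G₀) = ∅. -/

import Mathlib

open scoped Classical

namespace KEG

variable {V : Type*}

/-- `S` is a stable (independent) set of vertices of `G`. -/
def IsStable (G : SimpleGraph V) (S : Finset V) : Prop :=
  ∀ ⦃x⦄, x ∈ S → ∀ ⦃y⦄, y ∈ S → ¬G.Adj x y

/-- The stability number `α(G)`: maximum cardinality of a stable set. -/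
noncomputable def alphaNum (G : SimpleGraph V) : ℕ :=
  sSup {n | ∃ S : Finset V, IsStable G S ∧ S.card = n}

/-- `S` is a maximum stable set of `G`. -/
def IsMaxStable (G : SimpleGraph V) (S : Finset V) : Prop :=
  IsStable G S ∧ S.card = alphaNum G

/-- `M` is a matching of `G`: a set of edges of `G`, pairwise non-incident. -/
def IsMatching (G : SimpleGraph V) (M : Finset (Sym2 V)) : Prop :=
  (∀ e ∈ M, e ∈ G.edgeSet) ∧
    ∀ e ∈ M, ∀ f ∈ M, e ≠ f → ∀ v : V, v ∈ e → v ∉ f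

/-- The matching number `μ(G)`: maximum cardinality of a matching. -/
noncomputable def muNum (G : SimpleGraph V) : ℕ :=
  sSup {n | ∃ M : Finset (Sym2 V), IsMatching G M ∧ M.card = n}

/-- A perfect matching: a matching covering every vertex. -/
def IsPerfectMatching (G : SimpleGraph V) (M : Finset (Sym2 V)) : Prop :=
  IsMatching G M ∧ ∀ v : V, ∃ e ∈ M, v ∈ e

/-- A maximal matching: a matching such that no edge of `G` can be added to it
while keeping pairwise non-incidence, i.e. every edge of `G` outside `M` is
incident to an edge of `M`. -/
def IsMaximalMatching (G : SimpleGraph V) (M : Finset (Sym2 V)) : Prop :=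
  IsMatching G M ∧ ∀ e ∈ G.edgeSet, e ∉ M → ∃ f ∈ M, ∃ v : V, v ∈ e ∧ v ∈ f

/-- `G` is a König-Egerváry graph: `α(G) + μ(G) = |V(G)|`. -/
def KonigEgervary (G : SimpleGraph V) [Fintype V] : Prop :=
  alphaNum G + muNum G = Fintype.card V

/-- `e` is an α-critical edge of `G`: `α(G - e) > α(G)`. -/
def IsAlphaCritical (G : SimpleGraph V) (e : Sym2 V) : Prop :=
  e ∈ G.edgeSet ∧ alphaNum G < alphaNum (G.deleteEdges {e})

/-- `e` is a μ-critical edge of `G`: `μ(G - e) < μ(G)`. -/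
def IsMuCritical (G : SimpleGraph V) (e : Sym2 V) : Prop :=
  e ∈ G.edgeSet ∧ muNum (G.deleteEdges {e}) < muNum G

/-- `core(G)`: the set of vertices belonging to every maximum stable set of `G`. -/
def core (G : SimpleGraph V) : Set V :=
  {v | ∀ S : Finset V, IsMaxStable G S → v ∈ S}

/-- `ξ(G) = |core(G)|`. -/
noncomputable def xi (G : SimpleGraph V) : ℕ := (core G).ncard

/-- `σ(G)`: the number of vertices belonging to no maximum stable set of `G`. -/
noncomputable def sigmaNum (G : SimpleGraph V) : ℕ :=
  {v : V | ∀ S : Finset V, IsMaxStable G S → v ∉ S}.ncard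

/-- `η(G)`: the number of α-critical edges of `G`. -/
noncomputable def eta (G : SimpleGraph V) : ℕ :=
  {e : Sym2 V | IsAlphaCritical G e}.ncard

/-- `N(A)`: the set of vertices adjacent to some vertex of `A`. -/
def nbhd (G : SimpleGraph V) (A : Set V) : Set V :=
  {v | ∃ a ∈ A, G.Adj a v}

/-- `N[A] = A ∪ N(A)`: the closed neighborhood of `A`. -/
def closedNbhd (G : SimpleGraph V) (A : Set V) : Set V :=
  A ∪ nbhd G A


/-!
Every vertex of a maximum stable set `S` that lies in `N[core(G)]` lies in `core(G)`: a core
vertex is in `S`, so its neighbours are not. Hence `S` splits as `core(G) ∪ (S ∩ V(G₀))`, and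
conversely, since no vertex of `G₀` is adjacent to `core(G)`, adding `core(G)` to a stable set
of `G₀` keeps it stable. These two maps are mutually inverse between maximum stable sets, which
gives the formula for `α` and the description of the maximum stable sets of `G₀`. A vertex of
`core(G₀)` would then lie in every maximum stable set of `G`, i.e. in `core(G) ⊆ N[core(G)]`.
-/

section Stable

variable {G : SimpleGraph V} {A S U : Finset V}

lemma IsStable.mono (hS : IsStable G S) (hUS : U ⊆ S) : IsStable G U :=
  fun _ hx _ hy => hS (hUS hx) (hUS hy)

lemma isStable_induce_iff {W : Set V} {T : Finset W} :
    IsStable (G.induce W) T ↔ IsStable G (T.map (Function.Embedding.subtype (· ∈ W))) := by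
  constructor
  · intro h x hx y hy
    obtain ⟨x, hxT, rfl⟩ := Finset.mem_map.1 hx
    obtain ⟨y, hyT, rfl⟩ := Finset.mem_map.1 hy
    exact h hxT hyT
  · exact fun h x hx y hy => h (Finset.mem_map_of_mem _ hx) (Finset.mem_map_of_mem _ hy)

lemma coe_map_subtype_subset {W : Set V} (T : Finset W) :
    ↑(T.map (Function.Embedding.subtype (· ∈ W))) ⊆ W := by
  intro _ hv
  obtain ⟨x, -, rfl⟩ := Finset.mem_map.1 hv
  exact x.2

lemma subset_closedNbhd (G : SimpleGraph V) (A : Set V) : A ⊆ closedNbhd G A :=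
  Set.subset_union_left

lemma IsStable.filter_mem_closedNbhd (hS : IsStable G S) (hAS : A ⊆ S) :
    S.filter (· ∈ closedNbhd G ↑A) = A := by
  ext v
  simp only [Finset.mem_filter, closedNbhd, nbhd, Set.mem_union, Finset.mem_coe]
  constructor
  · rintro ⟨hvS, hvA | ⟨a, haA, hav⟩⟩
    · exact hvA
    · exact absurd hav (hS (hAS haA) hvS)
  · exact fun hvA => ⟨hAS hvA, Or.inl hvA⟩

lemma IsStable.card_eq_card_add_card_filter (hS : IsStable G S) (hAS : A ⊆ S) :
    S.card = A.card + (S.filter (· ∈ (closedNbhd G ↑A)ᶜ)).card := by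
  have h := Finset.card_filter_add_card_filter_not (s := S) (· ∈ closedNbhd G ↑A)
  rw [hS.filter_mem_closedNbhd hAS] at h
  exact h.symm

lemma IsStable.union_of_subset_compl_closedNbhd (hA : IsStable G A) (hU : IsStable G U)
    (hUA : ↑U ⊆ (closedNbhd G ↑A)ᶜ) : IsStable G (U ∪ A) := by
  have hnadj : ∀ ⦃u⦄, u ∈ U → ∀ ⦃a⦄, a ∈ A → ¬G.Adj a u := fun u hu a ha hau =>
    hUA hu (Or.inr ⟨a, ha, hau⟩)
  intro x hx y hy
  rcases Finset.mem_union.1 hx with hx | hx <;> rcases Finset.mem_union.1 hy with hy | hy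
  · exact hU hx hy
  · exact fun hxy => hnadj hx hy hxy.symm
  · exact hnadj hy hx
  · exact hA hx hy

lemma disjoint_of_subset_compl_closedNbhd (hUA : ↑U ⊆ (closedNbhd G ↑A)ᶜ) : Disjoint U A :=
  Finset.disjoint_coe.1 <|
    Set.disjoint_of_subset_left hUA (disjoint_compl_left.mono_right (subset_closedNbhd G _))

lemma card_map_union (T : Finset ↥(closedNbhd G ↑A)ᶜ) :
    (T.map (Function.Embedding.subtype (· ∈ (closedNbhd G ↑A)ᶜ)) ∪ A).card = T.card + A.card := by
  rw [Finset.card_union_of_disjoint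
    (disjoint_of_subset_compl_closedNbhd (coe_map_subtype_subset T)), Finset.card_map]

lemma IsMaxStable.subset_of_subset_core (hS : IsMaxStable G S) (hA : ↑A ⊆ core G) : A ⊆ S :=
  fun _ hv => hA hv S hS

end Stable

section Maximum

variable [Fintype V] {G : SimpleGraph V} {A S : Finset V}

lemma bddAbove_card_isStable (G : SimpleGraph V) :
    BddAbove {n | ∃ S : Finset V, IsStable G S ∧ S.card = n} :=
  ⟨Fintype.card V, by rintro n ⟨S, -, rfl⟩; exact S.card_le_univ⟩

lemma IsStable.card_le_alphaNum (hS : IsStable G S) : S.card ≤ alphaNum G :=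
  le_csSup (bddAbove_card_isStable G) ⟨S, hS, rfl⟩

lemma exists_isMaxStable (G : SimpleGraph V) : ∃ S, IsMaxStable G S := by
  obtain ⟨S, hS, hcard⟩ := Nat.sSup_mem (s := {n | ∃ S : Finset V, IsStable G S ∧ S.card = n})
    ⟨0, ∅, fun _ hx => absurd hx (Finset.notMem_empty _), rfl⟩ (bddAbove_card_isStable G)
  exact ⟨S, hS, hcard⟩

lemma isStable_of_subset_core (hA : ↑A ⊆ core G) : IsStable G A := by
  obtain ⟨S, hS⟩ := exists_isMaxStable G
  exact hS.1.mono (hS.subset_of_subset_core hA)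

end Maximum

section CoreRemoval

variable [Fintype V] {G : SimpleGraph V} {A : Finset V}

lemma isStable_map_union_of_subset_core (hA : ↑A ⊆ core G) {T : Finset ↥(closedNbhd G ↑A)ᶜ}
    (hT : IsStable (G.induce (closedNbhd G ↑A)ᶜ) T) :
    IsStable G (T.map (Function.Embedding.subtype (· ∈ (closedNbhd G ↑A)ᶜ)) ∪ A) :=
  (isStable_of_subset_core hA).union_of_subset_compl_closedNbhd (isStable_induce_iff.1 hT)
    (coe_map_subtype_subset T)

lemma alphaNum_eq_alphaNum_induce_add_card (hA : ↑A ⊆ core G) :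
    alphaNum G = alphaNum (G.induce (closedNbhd G ↑A)ᶜ) + A.card := by
  apply le_antisymm
  · obtain ⟨S, hS⟩ := exists_isMaxStable G
    have hst : IsStable (G.induce (closedNbhd G ↑A)ᶜ) (S.subtype (· ∈ (closedNbhd G ↑A)ᶜ)) := by
      rw [isStable_induce_iff, Finset.subtype_map]
      exact hS.1.mono (Finset.filter_subset _ _)
    have hcard := hS.1.card_eq_card_add_card_filter (hS.subset_of_subset_core hA)
    rw [← Finset.card_subtype, hS.2] at hcard
    have := hst.card_le_alphaNum
    omega
  · obtain ⟨T, hT⟩ := exists_isMaxStable (G.induce (closedNbhd G ↑A)ᶜ)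
    rw [← hT.2, ← card_map_union]
    exact (isStable_map_union_of_subset_core hA hT.1).card_le_alphaNum

lemma isMaxStable_induce_iff (hA : ↑A ⊆ core G) (T : Finset ↥(closedNbhd G ↑A)ᶜ) :
    IsMaxStable (G.induce (closedNbhd G ↑A)ᶜ) T ↔
      ∃ S : Finset V, IsMaxStable G S ∧
        (↑(T.map (Function.Embedding.subtype (· ∈ (closedNbhd G ↑A)ᶜ))) : Set V) =
          ↑S ∩ (closedNbhd G ↑A)ᶜ := by
  have hα := alphaNum_eq_alphaNum_induce_add_card hA
  constructor
  · intro hT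
    refine ⟨_, ⟨isStable_map_union_of_subset_core hA hT.1, by rw [card_map_union, hT.2, hα]⟩, ?_⟩
    have hAW : ↑A ∩ (closedNbhd G ↑A)ᶜ = ∅ :=
      Set.disjoint_iff_inter_eq_empty.1 (disjoint_compl_right.mono_left (subset_closedNbhd _ _))
    rw [Finset.coe_union, Set.union_inter_distrib_right, hAW, Set.union_empty,
      Set.inter_eq_left.2 (coe_map_subtype_subset T)]
  · rintro ⟨S, hS, hTS⟩
    have hT : T.map (Function.Embedding.subtype (· ∈ (closedNbhd G ↑A)ᶜ)) =
        S.filter (· ∈ (closedNbhd G ↑A)ᶜ) :=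
      Finset.coe_injective (by rw [hTS, Finset.coe_filter]; rfl)
    have hcard := hS.1.card_eq_card_add_card_filter (hS.subset_of_subset_core hA)
    rw [← hT, Finset.card_map, hS.2, hα] at hcard
    refine ⟨isStable_induce_iff.2 ?_, by omega⟩
    rw [hT]
    exact hS.1.mono (Finset.filter_subset _ _)

lemma mem_core_of_mem_core_induce (hA : ↑A ⊆ core G) {v : ↥(closedNbhd G ↑A)ᶜ}
    (hv : v ∈ core (G.induce (closedNbhd G ↑A)ᶜ)) : ↑v ∈ core G := by
  intro S hS
  have hmax := (isMaxStable_induce_iff hA (S.subtype (· ∈ (closedNbhd G ↑A)ᶜ))).2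
    ⟨S, hS, by rw [Finset.subtype_map, Finset.coe_filter]; rfl⟩
  exact Finset.mem_subtype.1 (hv _ hmax)

end CoreRemoval

/-- For `G₀ = G - N[core(G)]`: `α(G) = α(G₀) + ξ(G)`, the maximum stable sets
of `G₀` are exactly the traces `S ∩ V(G₀)` of maximum stable sets `S` of `G`,
and `core(G₀) = ∅`. -/
theorem stmt_12 {V : Type*} [Fintype V] (G : SimpleGraph V)
    (W : Set V) (hW : W = (closedNbhd G (core G))ᶜ) :
    alphaNum G = alphaNum (G.induce W) + xi G ∧
      (∀ T : Finset ↥W,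
        IsMaxStable (G.induce W) T ↔
          ∃ S : Finset V, IsMaxStable G S ∧
            (↑(T.map (Function.Embedding.subtype fun x => x ∈ W)) : Set V) =
              ↑S ∩ W) ∧
      core (G.induce W) = (∅ : Set ↥W) := by
  obtain ⟨C, hC⟩ := (Set.toFinite (core G)).exists_finset_coe
  have hxi : xi G = C.card := by rw [xi, ← hC, Set.ncard_coe_finset]
  rw [← hC] at hW
  subst hW
  refine ⟨hxi ▸ alphaNum_eq_alphaNum_induce_add_card hC.subset, isMaxStable_induce_iff hC.subset,
    Set.eq_empty_of_forall_notMem fun v hv => v.2 ?_⟩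
  have hvC := mem_core_of_mem_core_induce hC.subset hv
  rw [← hC] at hvC
  exact subset_closedNbhd G _ hvC

end KEG
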